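/- arXiv:2210.13954 — 2 statements merged into one kernel-verified Lean document; each statement's English description precedes it below -/
import Mathlib

section
/- For any square-integrable random variable Y and conditioning random variables B, A (with A ∈ {0,1}) and Z*, the OFF predictor f_OFF, which equals E[Y | B] on the event {A=0} and E[Y | B, A, Z*] on the event {A=1}, satisfies E[(Y - E[Y|B])^2] ≥ E[(Y - f_OFF)^2]. That is, Optional Feature Fairness obeys Predictive Non-Degradation. -/
/-!
`E[Y | B, A, Z*]` is the orthogonal projection of `Y` onto the `L²` functions of `(B, A, Z*)`,
and both `E[Y | B]` and `f_OFF` are such functions. By Pythagoras, the mean-squared error of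
either one is the irreducible error of `E[Y | B, A, Z*]` plus its squared `L²` distance to
`E[Y | B, A, Z*]`. Pointwise, `f_OFF` is never farther from `E[Y | B, A, Z*]` than `E[Y | B]`:
it coincides with `E[Y | B]` where `A = 0` and with `E[Y | B, A, Z*]` elsewhere.
-/

open MeasureTheory

section Pythagoras

variable {Ω : Type*} {m mΩ : MeasurableSpace Ω} {μ : Measure Ω} {Y g h : Ω → ℝ}

lemma integral_mul_sub_condExp_eq_zero (hm : m ≤ mΩ) [SigmaFinite (μ.trim hm)]
    (hg : StronglyMeasurable[m] g) (hY : Integrable Y μ)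
    (hgY : Integrable (g * (Y - μ[Y | m])) μ) :
    ∫ ω, g ω * (Y ω - μ[Y | m] ω) ∂μ = 0 := by
  have hresidual : μ[Y - μ[Y | m] | m] =ᵐ[μ] 0 := by
    refine (condExp_sub hY integrable_condExp m).trans ?_
    rw [condExp_of_stronglyMeasurable hm stronglyMeasurable_condExp integrable_condExp, sub_self]
  calc ∫ ω, g ω * (Y ω - μ[Y | m] ω) ∂μ
      = ∫ ω, μ[g * (Y - μ[Y | m]) | m] ω ∂μ := (integral_condExp hm).symm
    _ = ∫ ω, (g * μ[Y - μ[Y | m] | m]) ω ∂μ :=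
        integral_congr_ae (condExp_mul_of_stronglyMeasurable_left hg hgY
          (hY.sub integrable_condExp))
    _ = ∫ _, (0 : ℝ) ∂μ := integral_congr_ae (hresidual.mono fun ω hω => by simp [hω])
    _ = 0 := integral_zero Ω ℝ

variable [IsFiniteMeasure μ]

lemma integral_sub_sq_eq_integral_sub_condExp_sq_add (hm : m ≤ mΩ) (hY : MemLp Y 2 μ)
    (hg : StronglyMeasurable[m] g) (hg₂ : MemLp g 2 μ) :
    ∫ ω, (Y ω - g ω) ^ 2 ∂μ
      = ∫ ω, (Y ω - μ[Y | m] ω) ^ 2 ∂μ + ∫ ω, (μ[Y | m] ω - g ω) ^ 2 ∂μ := by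
  have hE₂ : MemLp (μ[Y | m]) 2 μ := hY.condExp one_le_two
  have hcross : Integrable ((μ[Y | m] - g) * (Y - μ[Y | m])) μ :=
    (hE₂.sub hg₂).integrable_mul (hY.sub hE₂)
  have hresidual_sq : Integrable (fun ω => (Y ω - μ[Y | m] ω) ^ 2) μ := (hY.sub hE₂).integrable_sq
  have hdist_sq : Integrable (fun ω => (μ[Y | m] ω - g ω) ^ 2) μ := (hE₂.sub hg₂).integrable_sq
  have hcross₂ : Integrable (fun ω => 2 * ((μ[Y | m] ω - g ω) * (Y ω - μ[Y | m] ω))) μ :=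
    hcross.const_mul 2
  have hcross_zero : ∫ ω, (μ[Y | m] ω - g ω) * (Y ω - μ[Y | m] ω) ∂μ = 0 :=
    integral_mul_sub_condExp_eq_zero hm (stronglyMeasurable_condExp.sub hg)
      (hY.integrable one_le_two) hcross
  have hexpand : (fun ω => (Y ω - g ω) ^ 2) = fun ω => (Y ω - μ[Y | m] ω) ^ 2
      + ((μ[Y | m] ω - g ω) ^ 2 + 2 * ((μ[Y | m] ω - g ω) * (Y ω - μ[Y | m] ω))) := by
    funext ω; ring
  rw [hexpand, integral_add hresidual_sq (hdist_sq.fun_add hcross₂),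
    integral_add hdist_sq hcross₂, integral_const_mul, hcross_zero, mul_zero, add_zero]

lemma integral_sub_sq_le_of_condExp_sub_sq_le (hm : m ≤ mΩ) (hY : MemLp Y 2 μ)
    (hg : StronglyMeasurable[m] g) (hg₂ : MemLp g 2 μ)
    (hh : StronglyMeasurable[m] h) (hh₂ : MemLp h 2 μ)
    (hgh : ∀ᵐ ω ∂μ, (μ[Y | m] ω - g ω) ^ 2 ≤ (μ[Y | m] ω - h ω) ^ 2) :
    ∫ ω, (Y ω - g ω) ^ 2 ∂μ ≤ ∫ ω, (Y ω - h ω) ^ 2 ∂μ := by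
  have hE₂ : MemLp (μ[Y | m]) 2 μ := hY.condExp one_le_two
  rw [integral_sub_sq_eq_integral_sub_condExp_sq_add hm hY hg hg₂,
    integral_sub_sq_eq_integral_sub_condExp_sq_add hm hY hh hh₂]
  gcongr 1
  exact integral_mono_ae (hE₂.sub hg₂).integrable_sq (hE₂.sub hh₂).integrable_sq hgh

end Pythagoras

theorem off_predictive_non_degradation_general
    {Ω β γ : Type*} {mΩ : MeasurableSpace Ω} {mβ : MeasurableSpace β}
    {mγ : MeasurableSpace γ}
    (μ : Measure Ω) [IsProbabilityMeasure μ]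
    (Y : Ω → ℝ) (B : Ω → β) (A : Ω → ℝ) (Z : Ω → γ)
    (hB : Measurable B) (hA : Measurable A) (hZ : Measurable Z)
    (hY : MemLp Y 2 μ)
    (m0 m1 : MeasurableSpace Ω)
    (hm0 : m0 = MeasurableSpace.comap B mβ)
    (hm1 : m1 = MeasurableSpace.comap B mβ ⊔ MeasurableSpace.comap A inferInstance
                  ⊔ MeasurableSpace.comap Z mγ)
    (fOFF : Ω → ℝ)
    (hfOFF : fOFF = fun ω => if A ω = 0 then (μ[Y | m0]) ω else (μ[Y | m1]) ω) :
    ∫ ω, (Y ω - (μ[Y | m0]) ω) ^ 2 ∂μ ≥ ∫ ω, (Y ω - fOFF ω) ^ 2 ∂μ := by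
  subst hfOFF
  have hm1Ω : m1 ≤ mΩ := hm1 ▸ sup_le (sup_le hB.comap_le hA.comap_le) hZ.comap_le
  have hm01 : m0 ≤ m1 := hm0 ▸ hm1 ▸ le_sup_left.trans le_sup_left
  have hA0 : MeasurableSet[m1] {ω | A ω = 0} :=
    (hm1 ▸ le_sup_right.trans le_sup_left : MeasurableSpace.comap A inferInstance ≤ m1) _
      ⟨{0}, measurableSet_singleton 0, rfl⟩
  have hE0 : StronglyMeasurable[m1] (μ[Y | m0]) := stronglyMeasurable_condExp.mono hm01
  have hE₂ (m : MeasurableSpace Ω) : MemLp (μ[Y | m]) 2 μ := hY.condExp one_le_two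
  refine integral_sub_sq_le_of_condExp_sub_sq_le hm1Ω hY
    (hE0.ite hA0 stronglyMeasurable_condExp)
    (MemLp.piecewise (s := {ω | A ω = 0}) (hm1Ω _ hA0) ((hE₂ m0).restrict _) ((hE₂ m1).restrict _))
    hE0 (hE₂ m0) (ae_of_all _ fun ω => ?_)
  by_cases hω : A ω = 0 <;> simp [hω, sq_nonneg]

/-- the OFF predictor (`E[Y|B]` on `{A=0}`, `E[Y|B,A,Z*]` on `{A=1}`) obeys
Predictive Non-Degradation: its MSE is at most that of the base model `E[Y|B]`. -/
theorem off_predictive_non_degradation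
    {Ω β γ : Type*} {mΩ : MeasurableSpace Ω} {mβ : MeasurableSpace β}
    {mγ : MeasurableSpace γ}
    (μ : Measure Ω) [IsProbabilityMeasure μ]
    (Y : Ω → ℝ) (B : Ω → β) (A : Ω → ℝ) (Z : Ω → γ)
    (hB : Measurable B) (hA : Measurable A) (hZ : Measurable Z)
    (hA01 : ∀ ω, A ω = 0 ∨ A ω = 1)
    (hY : MemLp Y 2 μ)
    (m0 m1 : MeasurableSpace Ω)
    (hm0 : m0 = MeasurableSpace.comap B mβ)
    (hm1 : m1 = MeasurableSpace.comap B mβ ⊔ MeasurableSpace.comap A inferInstance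
                  ⊔ MeasurableSpace.comap Z mγ)
    (fOFF : Ω → ℝ)
    (hfOFF : fOFF = fun ω => if A ω = 0 then (μ[Y | m0]) ω else (μ[Y | m1]) ω) :
    ∫ ω, (Y ω - (μ[Y | m0]) ω) ^ 2 ∂μ ≥ ∫ ω, (Y ω - fOFF ω) ^ 2 ∂μ :=
  off_predictive_non_degradation_general (mΩ := mΩ) μ Y B A Z hB hA hZ hY m0 m1 hm0 hm1 fOFF hfOFF
end

section
/- In a Naive Bayes model with independent availability mechanisms, where p(b, a, z, y) = (∏_{i=1}^n p(b_i | y))·(∏_{i=1}^r p(z_i | y)·p(a_i | z_i, y))·p(y), the odds for any set I of available features factor as odds(Y=1 | b, z_I, A_I=1) = (∏_{i=1}^n p(b_i|Y=1)/p(b_i|Y=0)) · (∏_{i∈I} [p(z_i|Y=1)p(A_i=1|z_i,Y=1)] / [p(z_i|Y=0)p(A_i=1|z_i,Y=0)]) · p(Y=1)/p(Y=0). -/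
open Finset

/-!
The assignments of the optional features compatible with the observation `z_I, A_I = 1` form a
product set, so summing the factorised joint over them factorises coordinatewise: each feature
outside `I` contributes its normalisation `∑ p(z_j|y) p(a_j|z_j,y) = 1`, and each feature in `I`
its observed factor. Numerator and denominator of the odds are then products, and their ratio
splits factor by factor.
-/

section Marginalization

variable {ι α : Type*} [Fintype ι] [DecidableEq ι] [Fintype α]

theorem Finset.filter_forall_mem_eq_piFinset (I : Finset ι) (w : ι → α)
    [DecidablePred fun f : ι → α => ∀ i ∈ I, f i = w i] :
    univ.filter (fun f : ι → α => ∀ i ∈ I, f i = w i)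
      = Fintype.piFinset (fun i => if i ∈ I then {w i} else univ) := by
  ext f
  simp only [mem_filter, Fintype.mem_piFinset, mem_univ, true_and]
  refine ⟨fun h i => ?_, fun h i hi => by simpa [hi] using h i⟩
  by_cases hi : i ∈ I <;> simp [hi, h i]

theorem Finset.sum_prod_filter_forall_mem_eq {R : Type*} [CommSemiring R]
    (I : Finset ι) (w : ι → α) [DecidablePred fun f : ι → α => ∀ i ∈ I, f i = w i]
    (g : ι → α → R) (hg : ∀ i ∉ I, ∑ a, g i a = 1) :
    ∑ f ∈ univ.filter (fun f : ι → α => ∀ i ∈ I, f i = w i), ∏ i, g i (f i)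
      = ∏ i ∈ I, g i (w i) := by
  have hfactor : ∀ i, ∑ a ∈ (if i ∈ I then {w i} else univ), g i a
      = if i ∈ I then g i (w i) else 1 := fun i => by
    by_cases hi : i ∈ I <;> simp [hi, hg]
  rw [filter_forall_mem_eq_piFinset, ← prod_univ_sum]
  simp only [hfactor, prod_ite_mem, univ_inter]

end Marginalization

theorem naive_bayes_odds_general
    {βb ζ : Type*} [Fintype ζ] [DecidableEq ζ] {n r : ℕ}
    (pY : Bool → ℝ) (pB : Bool → Fin n → βb → ℝ)
    (pZ : Bool → Fin r → ζ → ℝ) (pA : Bool → Fin r → ζ → Bool → ℝ)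
    (q : Bool × (Fin n → βb) × (Fin r → ζ × Bool) → ℝ)
    (hq : ∀ y bv f, q (y, bv, f)
      = pY y * (∏ i, pB y i (bv i)) * ∏ j, pZ y j (f j).1 * pA y j (f j).1 (f j).2)
    (hsum : ∀ y j, ∑ za : ζ × Bool, pZ y j za.1 * pA y j za.1 za.2 = 1)
    (bv : Fin n → βb) (z : Fin r → ζ) (I : Finset (Fin r))
    (hY0 : 0 < pY false) (hB0 : ∀ i, 0 < pB false i (bv i))
    (hZA0 : ∀ i ∈ I, 0 < pZ false i (z i) * pA false i (z i) true) :
    (∑ f ∈ univ.filter (fun f : Fin r → ζ × Bool => ∀ i ∈ I, f i = (z i, true)),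
        q (true, bv, f))
      / (∑ f ∈ univ.filter (fun f : Fin r → ζ × Bool => ∀ i ∈ I, f i = (z i, true)),
        q (false, bv, f))
    = (∏ i, pB true i (bv i) / pB false i (bv i))
      * (∏ i ∈ I, (pZ true i (z i) * pA true i (z i) true)
          / (pZ false i (z i) * pA false i (z i) true))
      * (pY true / pY false) := by
  have marginal : ∀ y,
      ∑ f ∈ univ.filter (fun f : Fin r → ζ × Bool => ∀ i ∈ I, f i = (z i, true)), q (y, bv, f)
        = pY y * (∏ i, pB y i (bv i)) * ∏ i ∈ I, pZ y i (z i) * pA y i (z i) true := fun y => by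
    simp only [hq, ← mul_sum]
    exact congrArg _ <| sum_prod_filter_forall_mem_eq I (fun i => (z i, true))
      (fun j za => pZ y j za.1 * pA y j za.1 za.2) fun j _ => hsum y j
  have hB : 0 < ∏ i, pB false i (bv i) := prod_pos fun i _ => hB0 i
  have hZA : 0 < ∏ i ∈ I, pZ false i (z i) * pA false i (z i) true := prod_pos hZA0
  rw [marginal, marginal, prod_div_distrib, prod_div_distrib]
  field_simp

/-- Naive Bayes with independent availability mechanisms:
`p(b, a, z, y) = (∏ i, p(b_i|y)) (∏ j, p(z_j|y) p(a_j|z_j,y)) p(y)`. For any set `I` of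
available features, the odds of `Y=1` given `b`, `z_I` and `A_I = 1` factor into the
base-feature likelihood ratios, the per-feature value/availability ratios on `I`, and the
prior odds. -/
theorem naive_bayes_odds
    {βb ζ : Type*} [Fintype ζ] [DecidableEq ζ] {n r : ℕ}
    (pY : Bool → ℝ) (pB : Bool → Fin n → βb → ℝ)
    (pZ : Bool → Fin r → ζ → ℝ) (pA : Bool → Fin r → ζ → Bool → ℝ)
    (q : Bool × (Fin n → βb) × (Fin r → ζ × Bool) → ℝ)
    (hq : ∀ y bv f, q (y, bv, f)
      = pY y * (∏ i, pB y i (bv i)) * ∏ j, pZ y j (f j).1 * pA y j (f j).1 (f j).2)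
    (hsum : ∀ y j, ∑ za : ζ × Bool, pZ y j za.1 * pA y j za.1 za.2 = 1)
    (hnonneg : ∀ y j zv av, 0 ≤ pZ y j zv * pA y j zv av)
    (bv : Fin n → βb) (z : Fin r → ζ) (I : Finset (Fin r))
    (hY0 : 0 < pY false) (hB0 : ∀ i, 0 < pB false i (bv i))
    (hZA0 : ∀ i ∈ I, 0 < pZ false i (z i) * pA false i (z i) true) :
    (∑ f ∈ univ.filter (fun f : Fin r → ζ × Bool => ∀ i ∈ I, f i = (z i, true)),
        q (true, bv, f))
      / (∑ f ∈ univ.filter (fun f : Fin r → ζ × Bool => ∀ i ∈ I, f i = (z i, true)),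
        q (false, bv, f))
    = (∏ i, pB true i (bv i) / pB false i (bv i))
      * (∏ i ∈ I, (pZ true i (z i) * pA true i (z i) true)
          / (pZ false i (z i) * pA false i (z i) true))
      * (pY true / pY false) :=
  naive_bayes_odds_general pY pB pZ pA q hq hsum bv z I hY0 hB0 hZA0
end
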